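/- arXiv:1304.7954 — 4 statements merged into one kernel-verified Lean document; each statement's English description precedes it below -/
import Mathlib

section
/- The characteristic polynomial of the 6×6 real matrix J(X₀), where X₀ = (0,0,0,0,0,0), factors as the product (λ² + (δ₁+c)λ + (cδ₁ − α₁p₁)) · (λ² + (δ₂+c)λ + (cδ₂ − α₂q₂)) · (λ² + (δ₃+c)λ + (cδ₃ − α₃r₃)); consequently the six eigenvalues of J(X₀) are the real numbers (−δ₁−c ± √(4α₁p₁+(δ₁−c)²))/2, (−δ₂−c ± √(4α₂q₂+(δ₂−c)²))/2, and (−δ₃−c ± √(4α₃r₃+(δ₃−c)²))/2. -/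
open Polynomial Matrix

/-- Jacobian matrix of the HBV three-strain vector field at `x = (y₁,y₂,y₃,v₁,v₂,v₃)`. -/
noncomputable def Jhbv (α₁ α₂ α₃ δ₁ δ₂ δ₃ c p₁ p₂ q₂ q₃ r₃ : ℝ) (x : Fin 6 → ℝ) :
    Matrix (Fin 6) (Fin 6) ℝ :=
  !![-(α₁ * x 3 + δ₁), -(α₁ * x 3), -(α₁ * x 3), α₁ * (1 - x 0 - x 1 - x 2), 0, 0;
     -(α₂ * x 4), -(α₂ * x 4 + δ₂), -(α₂ * x 4), 0, α₂ * (1 - x 0 - x 1 - x 2), 0;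
     -(α₃ * x 5), -(α₃ * x 5), -(α₃ * x 5 + δ₃), 0, 0, α₃ * (1 - x 0 - x 1 - x 2);
     p₁, 0, 0, -c, 0, 0;
     p₂, q₂, 0, 0, -c, 0;
     0, q₃, r₃, 0, 0, -c]

/-!
At the infection-free state β = 1 and every vᵢ vanishes, so in the coordinate order
(y₁, v₁, y₂, v₂, y₃, v₃) the matrix `J(X₀)` is block lower triangular with diagonal blocks
`[[-δ₁, α₁], [p₁, -c]]`, `[[-δ₂, α₂], [q₂, -c]]`, `[[-δ₃, α₃], [r₃, -c]]`. Its characteristic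
polynomial is therefore the product of their characteristic polynomials. These quadratics have
discriminants `(δ₁ - c)² + 4α₁p₁`, `(δ₂ - c)² + 4α₂q₂`, `(δ₃ - c)² + 4α₃r₃`, all nonnegative, so
their roots are real and given by the quadratic formula.
-/

theorem monic_X_sq_add_C_mul_X_add_C {R : Type*} [CommRing R] [Nontrivial R] (b c : R) :
    (X ^ 2 + C b * X + C c).Monic := by
  monicity!

theorem roots_X_sq_add_C_mul_X_add_C {R : Type*} [CommRing R] [IsDomain R] {b c x₁ x₂ : R}
    (hb : x₁ + x₂ = -b) (hc : x₁ * x₂ = c) : (X ^ 2 + C b * X + C c).roots = {x₁, x₂} := by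
  simpa using (roots_quadratic_eq_pair_iff_of_ne_zero (x1 := x₁) (x2 := x₂)
    (b := b) (c := c) (one_ne_zero (α := R))).2 ⟨by linear_combination hb, by linear_combination -hc⟩

theorem roots_X_sq_add_C_mul_X_add_C_eq_sqrt {δ c a p : ℝ} (h : 0 ≤ 4 * a * p + (δ - c) ^ 2) :
    (X ^ 2 + C (δ + c) * X + C (c * δ - a * p)).roots =
      {(-δ - c + √(4 * a * p + (δ - c) ^ 2)) / 2, (-δ - c - √(4 * a * p + (δ - c) ^ 2)) / 2} :=
  roots_X_sq_add_C_mul_X_add_C (by ring) (by linear_combination -Real.sq_sqrt h / 4)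

theorem charpoly_Jhbv_zero (α₁ α₂ α₃ δ₁ δ₂ δ₃ c p₁ p₂ q₂ q₃ r₃ : ℝ) :
    (Jhbv α₁ α₂ α₃ δ₁ δ₂ δ₃ c p₁ p₂ q₂ q₃ r₃ ![0, 0, 0, 0, 0, 0]).charpoly =
      (X ^ 2 + C (δ₁ + c) * X + C (c * δ₁ - α₁ * p₁)) *
        (X ^ 2 + C (δ₂ + c) * X + C (c * δ₂ - α₂ * q₂)) *
        (X ^ 2 + C (δ₃ + c) * X + C (c * δ₃ - α₃ * r₃)) := by
  rw [Matrix.charpoly]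
  simp only [det_succ_row_zero, Fin.sum_univ_succ, Fin.sum_univ_zero]
  simp [Fin.succAbove, Fin.lt_def, submatrix_apply, Jhbv]
  ring

theorem stmt_1_general (α₁ α₂ α₃ δ₁ δ₂ δ₃ c p₁ p₂ q₂ q₃ r₃ : ℝ)
    (hα₁ : 0 < α₁) (hα₂ : 0 < α₂) (hα₃ : 0 < α₃)
    (hp₁ : 0 < p₁) (hq₂ : 0 < q₂) (hr₃ : 0 < r₃) :
    (Jhbv α₁ α₂ α₃ δ₁ δ₂ δ₃ c p₁ p₂ q₂ q₃ r₃ ![0, 0, 0, 0, 0, 0]).charpoly =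
        (X ^ 2 + C (δ₁ + c) * X + C (c * δ₁ - α₁ * p₁)) *
          (X ^ 2 + C (δ₂ + c) * X + C (c * δ₂ - α₂ * q₂)) *
          (X ^ 2 + C (δ₃ + c) * X + C (c * δ₃ - α₃ * r₃)) ∧
      (Jhbv α₁ α₂ α₃ δ₁ δ₂ δ₃ c p₁ p₂ q₂ q₃ r₃ ![0, 0, 0, 0, 0, 0]).charpoly.roots =
        {(-δ₁ - c + Real.sqrt (4 * α₁ * p₁ + (δ₁ - c) ^ 2)) / 2,
         (-δ₁ - c - Real.sqrt (4 * α₁ * p₁ + (δ₁ - c) ^ 2)) / 2,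
         (-δ₂ - c + Real.sqrt (4 * α₂ * q₂ + (δ₂ - c) ^ 2)) / 2,
         (-δ₂ - c - Real.sqrt (4 * α₂ * q₂ + (δ₂ - c) ^ 2)) / 2,
         (-δ₃ - c + Real.sqrt (4 * α₃ * r₃ + (δ₃ - c) ^ 2)) / 2,
         (-δ₃ - c - Real.sqrt (4 * α₃ * r₃ + (δ₃ - c) ^ 2)) / 2} := by
  rw [charpoly_Jhbv_zero]
  refine ⟨rfl, ?_⟩
  have monic₁ := monic_X_sq_add_C_mul_X_add_C (δ₁ + c) (c * δ₁ - α₁ * p₁)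
  have monic₂ := monic_X_sq_add_C_mul_X_add_C (δ₂ + c) (c * δ₂ - α₂ * q₂)
  have monic₃ := monic_X_sq_add_C_mul_X_add_C (δ₃ + c) (c * δ₃ - α₃ * r₃)
  rw [roots_mul ((monic₁.mul monic₂).mul monic₃).ne_zero, roots_mul (monic₁.mul monic₂).ne_zero,
    roots_X_sq_add_C_mul_X_add_C_eq_sqrt (by positivity),
    roots_X_sq_add_C_mul_X_add_C_eq_sqrt (by positivity),
    roots_X_sq_add_C_mul_X_add_C_eq_sqrt (by positivity)]
  rfl

/-- the characteristic polynomial of J(X₀) factors as the product of three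
quadratics, and consequently the six eigenvalues of J(X₀) are the six listed real numbers. -/
theorem stmt_1 (α₁ α₂ α₃ δ₁ δ₂ δ₃ c p₁ p₂ q₂ q₃ r₃ : ℝ)
    (hα₁ : 0 < α₁) (hα₂ : 0 < α₂) (hα₃ : 0 < α₃)
    (hδ₁ : 0 < δ₁) (hδ₂ : 0 < δ₂) (hδ₃ : 0 < δ₃) (hc : 0 < c)
    (hp₁ : 0 < p₁) (hp₂ : 0 < p₂) (hq₂ : 0 < q₂) (hq₃ : 0 < q₃) (hr₃ : 0 < r₃) :
    (Jhbv α₁ α₂ α₃ δ₁ δ₂ δ₃ c p₁ p₂ q₂ q₃ r₃ ![0, 0, 0, 0, 0, 0]).charpoly =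
        (X ^ 2 + C (δ₁ + c) * X + C (c * δ₁ - α₁ * p₁)) *
          (X ^ 2 + C (δ₂ + c) * X + C (c * δ₂ - α₂ * q₂)) *
          (X ^ 2 + C (δ₃ + c) * X + C (c * δ₃ - α₃ * r₃)) ∧
      (Jhbv α₁ α₂ α₃ δ₁ δ₂ δ₃ c p₁ p₂ q₂ q₃ r₃ ![0, 0, 0, 0, 0, 0]).charpoly.roots =
        {(-δ₁ - c + Real.sqrt (4 * α₁ * p₁ + (δ₁ - c) ^ 2)) / 2,
         (-δ₁ - c - Real.sqrt (4 * α₁ * p₁ + (δ₁ - c) ^ 2)) / 2,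
         (-δ₂ - c + Real.sqrt (4 * α₂ * q₂ + (δ₂ - c) ^ 2)) / 2,
         (-δ₂ - c - Real.sqrt (4 * α₂ * q₂ + (δ₂ - c) ^ 2)) / 2,
         (-δ₃ - c + Real.sqrt (4 * α₃ * r₃ + (δ₃ - c) ^ 2)) / 2,
         (-δ₃ - c - Real.sqrt (4 * α₃ * r₃ + (δ₃ - c) ^ 2)) / 2} :=
  stmt_1_general α₁ α₂ α₃ δ₁ δ₂ δ₃ c p₁ p₂ q₂ q₃ r₃ hα₁ hα₂ hα₃ hp₁ hq₂ hr₃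
end

section
/- Assume R₃ > 1 and let X₃ = (0, 0, 1 − 1/R₃, 0, 0, (R₃−1)δ₃/α₃). Then the six eigenvalues of J(X₃) are the real numbers (−α₃r₃(c+δ₁) ± √((α₃r₃(c−δ₁))² + 4α₃r₃α₁p₁cδ₃))/(2α₃r₃), (−α₃r₃(c+δ₂) ± √((α₃r₃(c−δ₂))² + 4α₃r₃α₂q₂cδ₃))/(2α₃r₃), and (−α₃r₃ − c² ± √(4c³δ₃ + (α₃r₃ − c²)²))/(2c). -/
/-!
At `X₃` only the third strain is present, so once the coordinates are grouped in the pairs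
`(yₖ, vₖ)` the Jacobian is block lower triangular with `2 × 2` diagonal blocks. Its
characteristic polynomial is therefore the product of the three quadratics
`(X - aₖ)(X + c) - bₖ pₖ`, where `bₖ = αₖ / R₃` and `a₃ = -R₃ δ₃`; each of them is split by the
quadratic formula, the discriminants being nonnegative because the parameters are positive.
-/

open Polynomial Matrix

lemma quadratic_eq_C_mul_X_sub_C_mul_X_sub_C {K : Type*} [Field K] [NeZero (2 : K)]
    {a b c s : K} (ha : a ≠ 0) (hs : discrim a b c = s * s) :
    C a * X ^ 2 + C b * X + C c =
      C a * ((X - C ((-b + s) / (2 * a))) * (X - C ((-b - s) / (2 * a)))) := by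
  have hsum : a * ((-b + s) / (2 * a) + (-b - s) / (2 * a)) = -b := by
    field_simp; ring
  have hprod : a * ((-b + s) / (2 * a) * ((-b - s) / (2 * a))) = c := by
    rw [discrim] at hs
    field_simp
    linear_combination hs
  have hsum' := congrArg C hsum
  have hprod' := congrArg C hprod
  simp only [map_mul, map_add, map_neg] at hsum' hprod'
  linear_combination X * hsum' - hprod'

lemma X_sub_C_mul_X_add_C_sub_C_eq {K : Type*} [Field K] [NeZero (2 : K)]
    {u v w a b c s : K} (ha : a ≠ 0) (hs : discrim a b c = s * s)
    (hb : b = a * (v - u)) (hc : c = a * (-(u * v) - w)) :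
    (X - C u) * (X + C v) - C w =
      (X - C ((-b + s) / (2 * a))) * (X - C ((-b - s) / (2 * a))) := by
  refine mul_left_cancel₀ (C_ne_zero.mpr ha) ?_
  rw [← quadratic_eq_C_mul_X_sub_C_mul_X_sub_C ha hs, hb, hc]
  simp only [map_mul, map_neg, map_sub]
  ring

set_option maxHeartbeats 400000 in
lemma charpoly_pairBlockLowerTriangular {R : Type*} [CommRing R]
    (a₁ a₂ a₃ b₁ b₂ b₃ t₁ t₂ p₁ p₂ q₂ q₃ r₃ c : R) :
    (!![a₁, 0, 0, b₁, 0, 0; 0, a₂, 0, 0, b₂, 0; t₁, t₂, a₃, 0, 0, b₃;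
        p₁, 0, 0, -c, 0, 0; p₂, q₂, 0, 0, -c, 0; 0, q₃, r₃, 0, 0, -c]).charpoly =
      ((X - C a₁) * (X + C c) - C (b₁ * p₁)) * ((X - C a₂) * (X + C c) - C (b₂ * q₂)) *
        ((X - C a₃) * (X + C c) - C (b₃ * r₃)) := by
  rw [Matrix.charpoly, Matrix.det_succ_row_zero]
  simp [Fin.sum_univ_succ, Matrix.det_succ_row_zero, charmatrix_apply,
    Matrix.submatrix_apply, Fin.succAbove, Matrix.diagonal_apply]
  ring

lemma Jhbv_strainThreeEquilibrium {α₁ α₂ α₃ δ₁ δ₂ δ₃ c p₁ p₂ q₂ q₃ r₃ R : ℝ} (hα₃ : α₃ ≠ 0) :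
    Jhbv α₁ α₂ α₃ δ₁ δ₂ δ₃ c p₁ p₂ q₂ q₃ r₃ ![0, 0, 1 - 1 / R, 0, 0, (R - 1) * δ₃ / α₃] =
      !![-δ₁, 0, 0, α₁ / R, 0, 0; 0, -δ₂, 0, 0, α₂ / R, 0;
        -((R - 1) * δ₃), -((R - 1) * δ₃), -(R * δ₃), 0, 0, α₃ / R;
        p₁, 0, 0, -c, 0, 0; p₂, q₂, 0, 0, -c, 0; 0, q₃, r₃, 0, 0, -c] := by
  have hv : α₃ * ((R - 1) * δ₃ / α₃) = (R - 1) * δ₃ := by field_simp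
  ext i j
  fin_cases i <;> fin_cases j <;> simp [Jhbv, hv] <;> ring

theorem stmt_4_general (α₁ α₂ α₃ δ₁ δ₂ δ₃ c p₁ p₂ q₂ q₃ r₃ : ℝ)
    (hα₁ : 0 < α₁) (hα₂ : 0 < α₂) (hα₃ : 0 < α₃)
    (hδ₃ : 0 < δ₃) (hc : 0 < c)
    (hp₁ : 0 < p₁) (hq₂ : 0 < q₂) (hr₃ : 0 < r₃) :
    let R₃ : ℝ := α₃ * r₃ / (c * δ₃)
    (Jhbv α₁ α₂ α₃ δ₁ δ₂ δ₃ c p₁ p₂ q₂ q₃ r₃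
          ![0, 0, 1 - 1 / R₃, 0, 0, (R₃ - 1) * δ₃ / α₃]).charpoly.roots =
      {(-(α₃ * r₃ * (c + δ₁)) +
          Real.sqrt ((α₃ * r₃ * (c - δ₁)) ^ 2 + 4 * α₃ * r₃ * α₁ * p₁ * c * δ₃)) /
            (2 * α₃ * r₃),
       (-(α₃ * r₃ * (c + δ₁)) -
          Real.sqrt ((α₃ * r₃ * (c - δ₁)) ^ 2 + 4 * α₃ * r₃ * α₁ * p₁ * c * δ₃)) /
            (2 * α₃ * r₃),
       (-(α₃ * r₃ * (c + δ₂)) +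
          Real.sqrt ((α₃ * r₃ * (c - δ₂)) ^ 2 + 4 * α₃ * r₃ * α₂ * q₂ * c * δ₃)) /
            (2 * α₃ * r₃),
       (-(α₃ * r₃ * (c + δ₂)) -
          Real.sqrt ((α₃ * r₃ * (c - δ₂)) ^ 2 + 4 * α₃ * r₃ * α₂ * q₂ * c * δ₃)) /
            (2 * α₃ * r₃),
       (-(α₃ * r₃) - c ^ 2 + Real.sqrt (4 * c ^ 3 * δ₃ + (α₃ * r₃ - c ^ 2) ^ 2)) / (2 * c),
       (-(α₃ * r₃) - c ^ 2 - Real.sqrt (4 * c ^ 3 * δ₃ + (α₃ * r₃ - c ^ 2) ^ 2)) / (2 * c)} := by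
  intro R₃
  set D₁ := (α₃ * r₃ * (c - δ₁)) ^ 2 + 4 * α₃ * r₃ * α₁ * p₁ * c * δ₃
  set D₂ := (α₃ * r₃ * (c - δ₂)) ^ 2 + 4 * α₃ * r₃ * α₂ * q₂ * c * δ₃
  set D₃ := 4 * c ^ 3 * δ₃ + (α₃ * r₃ - c ^ 2) ^ 2
  have h₁ : (X - C (-δ₁)) * (X + C c) - C (α₁ / R₃ * p₁) =
      (X - C ((-(α₃ * r₃ * (c + δ₁)) + √D₁) / (2 * (α₃ * r₃)))) *
        (X - C ((-(α₃ * r₃ * (c + δ₁)) - √D₁) / (2 * (α₃ * r₃)))) :=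
    X_sub_C_mul_X_add_C_sub_C_eq (c := α₃ * r₃ * c * δ₁ - α₁ * p₁ * c * δ₃) (by positivity)
      (by rw [discrim, Real.mul_self_sqrt (by positivity)]; ring) (by ring)
      (by simp only [R₃]; field_simp)
  have h₂ : (X - C (-δ₂)) * (X + C c) - C (α₂ / R₃ * q₂) =
      (X - C ((-(α₃ * r₃ * (c + δ₂)) + √D₂) / (2 * (α₃ * r₃)))) *
        (X - C ((-(α₃ * r₃ * (c + δ₂)) - √D₂) / (2 * (α₃ * r₃)))) :=
    X_sub_C_mul_X_add_C_sub_C_eq (c := α₃ * r₃ * c * δ₂ - α₂ * q₂ * c * δ₃) (by positivity)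
      (by rw [discrim, Real.mul_self_sqrt (by positivity)]; ring) (by ring)
      (by simp only [R₃]; field_simp)
  have h₃ : (X - C (-(R₃ * δ₃))) * (X + C c) - C (α₃ / R₃ * r₃) =
      (X - C ((-(α₃ * r₃ + c ^ 2) + √D₃) / (2 * c))) *
        (X - C ((-(α₃ * r₃ + c ^ 2) - √D₃) / (2 * c))) :=
    X_sub_C_mul_X_add_C_sub_C_eq (c := c * (α₃ * r₃ - c * δ₃)) (by positivity)
      (by rw [discrim, Real.mul_self_sqrt (by positivity)]; ring)
      (by simp only [R₃]; field_simp; ring) (by simp only [R₃]; field_simp)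
  rw [show 2 * α₃ * r₃ = 2 * (α₃ * r₃) by ring,
    show -(α₃ * r₃) - c ^ 2 = -(α₃ * r₃ + c ^ 2) by ring,
    Jhbv_strainThreeEquilibrium hα₃.ne', charpoly_pairBlockLowerTriangular, h₁, h₂, h₃]
  simp only [roots_mul, ne_eq, mul_eq_zero, X_sub_C_ne_zero, or_self, not_false_eq_true,
    roots_X_sub_C]
  rfl

/-- if R₃ > 1 and X₃ = (0, 0, 1 − 1/R₃, 0, 0, (R₃−1)δ₃/α₃), the six
eigenvalues of J(X₃) are the six listed real numbers. -/
theorem stmt_4 (α₁ α₂ α₃ δ₁ δ₂ δ₃ c p₁ p₂ q₂ q₃ r₃ : ℝ)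
    (hα₁ : 0 < α₁) (hα₂ : 0 < α₂) (hα₃ : 0 < α₃)
    (hδ₁ : 0 < δ₁) (hδ₂ : 0 < δ₂) (hδ₃ : 0 < δ₃) (hc : 0 < c)
    (hp₁ : 0 < p₁) (hp₂ : 0 < p₂) (hq₂ : 0 < q₂) (hq₃ : 0 < q₃) (hr₃ : 0 < r₃)
    (hR₃ : 1 < α₃ * r₃ / (c * δ₃)) :
    let R₃ : ℝ := α₃ * r₃ / (c * δ₃)
    (Jhbv α₁ α₂ α₃ δ₁ δ₂ δ₃ c p₁ p₂ q₂ q₃ r₃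
          ![0, 0, 1 - 1 / R₃, 0, 0, (R₃ - 1) * δ₃ / α₃]).charpoly.roots =
      {(-(α₃ * r₃ * (c + δ₁)) +
          Real.sqrt ((α₃ * r₃ * (c - δ₁)) ^ 2 + 4 * α₃ * r₃ * α₁ * p₁ * c * δ₃)) /
            (2 * α₃ * r₃),
       (-(α₃ * r₃ * (c + δ₁)) -
          Real.sqrt ((α₃ * r₃ * (c - δ₁)) ^ 2 + 4 * α₃ * r₃ * α₁ * p₁ * c * δ₃)) /
            (2 * α₃ * r₃),
       (-(α₃ * r₃ * (c + δ₂)) +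
          Real.sqrt ((α₃ * r₃ * (c - δ₂)) ^ 2 + 4 * α₃ * r₃ * α₂ * q₂ * c * δ₃)) /
            (2 * α₃ * r₃),
       (-(α₃ * r₃ * (c + δ₂)) -
          Real.sqrt ((α₃ * r₃ * (c - δ₂)) ^ 2 + 4 * α₃ * r₃ * α₂ * q₂ * c * δ₃)) /
            (2 * α₃ * r₃),
       (-(α₃ * r₃) - c ^ 2 + Real.sqrt (4 * c ^ 3 * δ₃ + (α₃ * r₃ - c ^ 2) ^ 2)) / (2 * c),
       (-(α₃ * r₃) - c ^ 2 - Real.sqrt (4 * c ^ 3 * δ₃ + (α₃ * r₃ - c ^ 2) ^ 2)) / (2 * c)} :=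
  stmt_4_general α₁ α₂ α₃ δ₁ δ₂ δ₃ c p₁ p₂ q₂ q₃ r₃ hα₁ hα₂ hα₃ hδ₃ hc hp₁ hq₂ hr₃
end

section
/- Let X₂ = (0, ȳ₂, ȳ₃, 0, v̄₂, v̄₃) be any point of ℝ⁶ with first and fourth coordinates zero and with 1 − ȳ₂ − ȳ₃ = 1/R₂. Then the two real numbers (−c − δ₁ ± √((δ₁−c)² + 4α₁p₁/R₂))/2 are eigenvalues of J(X₂); both of them are negative if and only if R₁ < R₂, and if R₁ > R₂ then the larger one is a positive eigenvalue of J(X₂). -/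
open Polynomial Matrix

@[simp] lemma c62 {α : Type*} (x : α) (u : Fin 5 → α) : Matrix.vecCons x u 2 = u 1 := rfl
@[simp] lemma c63 {α : Type*} (x : α) (u : Fin 5 → α) : Matrix.vecCons x u 3 = u 2 := rfl
@[simp] lemma c64 {α : Type*} (x : α) (u : Fin 5 → α) : Matrix.vecCons x u 4 = u 3 := rfl
@[simp] lemma c65 {α : Type*} (x : α) (u : Fin 5 → α) : Matrix.vecCons x u 5 = u 4 := rfl
@[simp] lemma c51 {α : Type*} (x : α) (u : Fin 4 → α) : Matrix.vecCons x u 1 = u 0 := rfl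
@[simp] lemma c52 {α : Type*} (x : α) (u : Fin 4 → α) : Matrix.vecCons x u 2 = u 1 := rfl
@[simp] lemma c53 {α : Type*} (x : α) (u : Fin 4 → α) : Matrix.vecCons x u 3 = u 2 := rfl
@[simp] lemma c54 {α : Type*} (x : α) (u : Fin 4 → α) : Matrix.vecCons x u 4 = u 3 := rfl
@[simp] lemma c41 {α : Type*} (x : α) (u : Fin 3 → α) : Matrix.vecCons x u 1 = u 0 := rfl
@[simp] lemma c42 {α : Type*} (x : α) (u : Fin 3 → α) : Matrix.vecCons x u 2 = u 1 := rfl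
@[simp] lemma c43 {α : Type*} (x : α) (u : Fin 3 → α) : Matrix.vecCons x u 3 = u 2 := rfl
@[simp] lemma c31 {α : Type*} (x : α) (u : Fin 2 → α) : Matrix.vecCons x u 1 = u 0 := rfl
@[simp] lemma c32 {α : Type*} (x : α) (u : Fin 2 → α) : Matrix.vecCons x u 2 = u 1 := rfl
@[simp] lemma c21 {α : Type*} (x : α) (u : Fin 1 → α) : Matrix.vecCons x u 1 = u 0 := rfl

set_option maxRecDepth 4000
set_option maxHeartbeats 1600000

lemma eval_key (α₁ α₂ α₃ δ₁ δ₂ δ₃ c p₁ p₂ q₂ q₃ r₃ y₂ y₃ v₂ v₃ μ : ℝ)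
    (hp₁ : p₁ ≠ 0)
    (hμ : (μ + δ₁) * (μ + c) = α₁ * p₁ * (1 - y₂ - y₃)) :
    (Jhbv α₁ α₂ α₃ δ₁ δ₂ δ₃ c p₁ p₂ q₂ q₃ r₃ ![0, y₂, y₃, 0, v₂, v₃]).charpoly.IsRoot μ := by
  set M := Jhbv α₁ α₂ α₃ δ₁ δ₂ δ₃ c p₁ p₂ q₂ q₃ r₃ ![0, y₂, y₃, 0, v₂, v₃] with hM
  have h1 : M.charpoly.eval μ = ((evalRingHom μ).mapMatrix (charmatrix M)).det := by
    rw [Matrix.charpoly, ← coe_evalRingHom, RingHom.map_det]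
  have h2 : (evalRingHom μ).mapMatrix (charmatrix M) =
      !![μ + δ₁, 0, 0, -(α₁*(1 - 0 - y₂ - y₃)), 0, 0;
         α₂*v₂, μ + (α₂*v₂ + δ₂), α₂*v₂, 0, -(α₂*(1 - 0 - y₂ - y₃)), 0;
         α₃*v₃, α₃*v₃, μ + (α₃*v₃ + δ₃), 0, 0, -(α₃*(1 - 0 - y₂ - y₃));
         -p₁, 0, 0, μ + c, 0, 0;
         -p₂, -q₂, 0, 0, μ + c, 0;
         0, -q₃, -r₃, 0, 0, μ + c] := by
    ext i j
    fin_cases i <;> fin_cases j <;>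
      simp [hM, Jhbv, charmatrix_apply, Matrix.one_apply, Matrix.map_apply,
        RingHom.mapMatrix_apply, Matrix.vecHead, Matrix.vecTail,
        Matrix.cons_val_succ, Matrix.cons_val_zero, Matrix.cons_val_one, Matrix.head_cons] <;>
      ring
  show M.charpoly.eval μ = 0
  rw [h1, h2]
  rw [← Matrix.exists_vecMul_eq_zero_iff]
  refine ⟨![p₁, 0, 0, μ + δ₁, 0, 0], ?_, ?_⟩
  · intro h
    exact hp₁ (by simpa using congrFun h 0)
  · ext j
    fin_cases j <;>
      simp [Matrix.vecMul, dotProduct, Fin.sum_univ_six] <;>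
      linarith [hμ, sq_nonneg μ]

/-- for any point X₂ = (0, ȳ₂, ȳ₃, 0, v̄₂, v̄₃) with 1 − ȳ₂ − ȳ₃ = 1/R₂,
the two real numbers (−c − δ₁ ± √((δ₁−c)² + 4α₁p₁/R₂))/2 are eigenvalues of J(X₂);
both are negative iff R₁ < R₂; and if R₁ > R₂ the larger one is a positive eigenvalue. -/
theorem stmt_8 (α₁ α₂ α₃ δ₁ δ₂ δ₃ c p₁ p₂ q₂ q₃ r₃ : ℝ)
    (hα₁ : 0 < α₁) (hα₂ : 0 < α₂) (hα₃ : 0 < α₃)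
    (hδ₁ : 0 < δ₁) (hδ₂ : 0 < δ₂) (hδ₃ : 0 < δ₃) (hc : 0 < c)
    (hp₁ : 0 < p₁) (hp₂ : 0 < p₂) (hq₂ : 0 < q₂) (hq₃ : 0 < q₃) (hr₃ : 0 < r₃)
    (y₂ y₃ v₂ v₃ : ℝ)
    (hsum : 1 - y₂ - y₃ = 1 / (α₂ * q₂ / (c * δ₂))) :
    let R₁ : ℝ := α₁ * p₁ / (c * δ₁)
    let R₂ : ℝ := α₂ * q₂ / (c * δ₂)
    let M := Jhbv α₁ α₂ α₃ δ₁ δ₂ δ₃ c p₁ p₂ q₂ q₃ r₃ ![0, y₂, y₃, 0, v₂, v₃]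
    let lp : ℝ := (-c - δ₁ + Real.sqrt ((δ₁ - c) ^ 2 + 4 * α₁ * p₁ / R₂)) / 2
    let lm : ℝ := (-c - δ₁ - Real.sqrt ((δ₁ - c) ^ 2 + 4 * α₁ * p₁ / R₂)) / 2
    M.charpoly.IsRoot lp ∧ M.charpoly.IsRoot lm ∧
      ((lp < 0 ∧ lm < 0) ↔ R₁ < R₂) ∧
      (R₂ < R₁ → 0 < lp ∧ M.charpoly.IsRoot lp) := by
  intro R₁ R₂ M lp lm
  have hR₁d : R₁ = α₁ * p₁ / (c * δ₁) := rfl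
  have hR₂d : R₂ = α₂ * q₂ / (c * δ₂) := rfl
  have hR₂ : 0 < R₂ := by rw [hR₂d]; positivity
  have hcδ : 0 < c * δ₁ := by positivity
  set s : ℝ := Real.sqrt ((δ₁ - c) ^ 2 + 4 * α₁ * p₁ / R₂) with hsdef
  have h4 : 0 < 4 * α₁ * p₁ / R₂ := div_pos (by positivity) hR₂
  have hDnn : 0 ≤ (δ₁ - c) ^ 2 + 4 * α₁ * p₁ / R₂ := by positivity
  have hs2 : s ^ 2 = (δ₁ - c) ^ 2 + 4 * α₁ * p₁ / R₂ := Real.sq_sqrt hDnn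
  have hs0 : 0 ≤ s := Real.sqrt_nonneg _
  have hlp : lp = (-c - δ₁ + s) / 2 := rfl
  have hlm : lm = (-c - δ₁ - s) / 2 := rfl
  have hb : 1 - y₂ - y₃ = 1 / R₂ := hsum
  have hrootp : M.charpoly.IsRoot lp := by
    apply eval_key _ _ _ _ _ _ _ _ _ _ _ _ _ _ _ _ _ hp₁.ne'
    rw [hb, hlp]
    linear_combination (1/4 : ℝ) * hs2
  have hrootm : M.charpoly.IsRoot lm := by
    apply eval_key _ _ _ _ _ _ _ _ _ _ _ _ _ _ _ _ _ hp₁.ne'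
    rw [hb, hlm]
    linear_combination (1/4 : ℝ) * hs2
  have hlmneg : lm < 0 := by rw [hlm]; nlinarith
  refine ⟨hrootp, hrootm, ⟨?_, ?_⟩, ?_⟩
  · rintro ⟨hlpneg, -⟩
    rw [hlp] at hlpneg
    have hslt : s < c + δ₁ := by linarith
    have h2 : s ^ 2 < (c + δ₁) ^ 2 := by nlinarith
    have hA : 4 * α₁ * p₁ / R₂ < 4 * (c * δ₁) := by nlinarith
    rw [div_lt_iff₀ hR₂] at hA
    rw [hR₁d, div_lt_iff₀ hcδ]
    nlinarith
  · intro hR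
    rw [hR₁d, div_lt_iff₀ hcδ] at hR
    have hA : 4 * α₁ * p₁ / R₂ < 4 * (c * δ₁) := by
      rw [div_lt_iff₀ hR₂]; nlinarith
    have h2 : s ^ 2 < (c + δ₁) ^ 2 := by nlinarith
    have hslt : s < c + δ₁ := by nlinarith
    constructor
    · rw [hlp]; linarith
    · exact hlmneg
  · intro hR
    rw [hR₁d, lt_div_iff₀ hcδ] at hR
    have hA : 4 * (c * δ₁) < 4 * α₁ * p₁ / R₂ := by
      rw [lt_div_iff₀ hR₂]; nlinarith
    have h2 : (c + δ₁) ^ 2 < s ^ 2 := by nlinarith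
    have hslt : c + δ₁ < s := by nlinarith
    exact ⟨by rw [hlp]; linarith, hrootp⟩
end

section
/- Set the mutation parameters p₂ = 0 and q₃ = 0 in the Jacobian matrix J, assume R₁ > 1, and let X₁ = (1 − 1/R₁, 0, 0, δ₁(R₁−1)/α₁, 0, 0). Then the six eigenvalues of J(X₁) are the real numbers (−α₁v̂₁ − δ₁ − c ± √((α₁v̂₁ + δ₁ − c)² + 4α₁p₁/R₁))/2 where v̂₁ = δ₁(R₁−1)/α₁, (−c − δ₂ ± √((δ₂−c)² + 4α₂q₂/R₁))/2, and (−c − δ₃ ± √((δ₃−c)² + 4α₃r₃/R₁))/2; and all six of them are negative if and only if R₁ > R₂ and R₁ > R₃. -/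
/-!
At `X₁` only strain 1 is present, and with `p₂ = q₃ = 0` the characteristic matrix of `J(X₁)`
is block triangular once each hepatocyte class is paired with its virion class. So the
characteristic polynomial is a product of three monic quadratics `(X + d)(X + c) - k`, with
`β = 1/R₁`, `k = α₁ β p₁, α₂ β q₂, α₃ β r₃` and `d = α₁ v̂₁ + δ₁, δ₂, δ₃`. Each has discriminant
`(d - c)² + 4k ≥ 0`, so the quadratic formula gives the six real eigenvalues, and both roots of a
factor are negative iff `k < d c`. For strain 1 this holds because `α₁ p₁ β = c δ₁ < c (α₁ v̂₁ + δ₁)`;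
for strains 2 and 3 it reads `α_i q_i / R₁ < c δ_i`, that is `R_i < R₁`.
-/

open Polynomial Matrix

-- Reordering the indices as 0, 3, 1, 4, 2, 5 makes the matrix block upper triangular
-- with three 2 × 2 diagonal blocks.
theorem det_fin_six_of_block_pairs {R : Type*} [CommRing R]
    (a00 a01 a02 a03 b11 b14 c22 c25 d30 d33 e41 e44 f52 f55 : R) :
    !![a00, a01, a02, a03, 0, 0;
        0, b11, 0, 0, b14, 0;
        0, 0, c22, 0, 0, c25;
        d30, 0, 0, d33, 0, 0;
        0, e41, 0, 0, e44, 0;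
        0, 0, f52, 0, 0, f55].det
    = (a00 * d33 - a03 * d30) * (b11 * e44 - b14 * e41) * (c22 * f55 - c25 * f52) := by
  simp [Matrix.det_succ_row_zero, Fin.sum_univ_succ, Fin.succAbove]
  ring

theorem charpoly_Jhbv_of_mutant_virions_zero (α₁ α₂ α₃ δ₁ δ₂ δ₃ c p₁ q₂ r₃ : ℝ) (x : Fin 6 → ℝ)
    (hx₄ : x 4 = 0) (hx₅ : x 5 = 0) :
    (Jhbv α₁ α₂ α₃ δ₁ δ₂ δ₃ c p₁ 0 q₂ 0 r₃ x).charpoly =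
      ((X + C (α₁ * x 3 + δ₁)) * (X + C c) - C (α₁ * (1 - x 0 - x 1 - x 2) * p₁)) *
      ((X + C δ₂) * (X + C c) - C (α₂ * (1 - x 0 - x 1 - x 2) * q₂)) *
      ((X + C δ₃) * (X + C c) - C (α₃ * (1 - x 0 - x 1 - x 2) * r₃)) := by
  set β := 1 - x 0 - x 1 - x 2
  have hM : charmatrix (Jhbv α₁ α₂ α₃ δ₁ δ₂ δ₃ c p₁ 0 q₂ 0 r₃ x) =
      !![X + C (α₁ * x 3 + δ₁), C (α₁ * x 3), C (α₁ * x 3), -C (α₁ * β), 0, 0;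
         0, X + C δ₂, 0, 0, -C (α₂ * β), 0;
         0, 0, X + C δ₃, 0, 0, -C (α₃ * β);
         -C p₁, 0, 0, X + C c, 0, 0;
         0, -C q₂, 0, 0, X + C c, 0;
         0, 0, -C r₃, 0, 0, X + C c] := by
    ext i j : 1
    fin_cases i <;> fin_cases j <;> simp [Jhbv, hx₄, hx₅, β]
    ring
  rw [Matrix.charpoly, hM, det_fin_six_of_block_pairs]
  simp only [map_mul]
  ring

theorem Multiset.insert_six_eq_add_pairs {α : Type*} (a b c d e f : α) :
    ({a, b, c, d, e, f} : Multiset α) = {a, b} + {c, d} + {e, f} := rfl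

section QuadraticPairs

variable {a e : ℝ}

theorem X_add_C_mul_X_add_C_sub_C_eq_prod {d c k : ℝ} (ha : a = -(d + c))
    (he : e = (d - c) ^ 2 + 4 * k) (he₀ : 0 ≤ e) :
    (X + C d) * (X + C c) - C k =
      (({(a + √e) / 2, (a - √e) / 2} : Multiset ℝ).map (X - C ·)).prod := by
  have hsum : (a + √e) / 2 + (a - √e) / 2 = -(d + c) := by rw [ha]; ring
  have hprod : (a + √e) / 2 * ((a - √e) / 2) = d * c - k := by
    calc (a + √e) / 2 * ((a - √e) / 2) = (a ^ 2 - √e ^ 2) / 4 := by ring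
      _ = d * c - k := by rw [Real.sq_sqrt he₀, ha, he]; ring
  calc (X + C d) * (X + C c) - C k
      = X ^ 2 - C ((a + √e) / 2 + (a - √e) / 2) * X + C ((a + √e) / 2 * ((a - √e) / 2)) := by
        rw [hsum, hprod]; simp only [map_neg, map_add, map_sub, map_mul]; ring
    _ = _ := by simp only [Multiset.insert_eq_cons, Multiset.map_cons, Multiset.map_singleton,
          Multiset.prod_cons, Multiset.prod_singleton, map_add, map_mul]; ring

theorem forall_mem_sqrt_pair_neg_iff :
    (∀ μ ∈ ({(a + √e) / 2, (a - √e) / 2} : Multiset ℝ), μ < 0) ↔ a < 0 ∧ e < a ^ 2 := by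
  simp only [Multiset.insert_eq_cons, Multiset.forall_mem_cons, Multiset.mem_singleton, forall_eq]
  have hs := Real.sqrt_nonneg e
  constructor
  · rintro ⟨hu, hw⟩
    refine ⟨by linarith, ?_⟩
    by_cases he : 0 ≤ e
    · nlinarith [Real.sq_sqrt he]
    · nlinarith
  · rintro ⟨ha, he⟩
    have : √e < -a := by
      rcases le_or_gt 0 e with h | h
      · exact (Real.sqrt_lt' (by linarith)).2 (by nlinarith)
      · rw [Real.sqrt_eq_zero'.2 h.le]; linarith
    constructor <;> linarith

end QuadraticPairs

theorem forall_mem_mutant_pair_neg_iff {α q δ c R : ℝ} (hc : 0 < c) (hδ : 0 < δ) (hR : 0 < R) :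
    (∀ μ ∈ ({(-c - δ + √((δ - c) ^ 2 + 4 * α * q / R)) / 2,
        (-c - δ - √((δ - c) ^ 2 + 4 * α * q / R)) / 2} : Multiset ℝ), μ < 0) ↔
      α * q / (c * δ) < R := by
  rw [forall_mem_sqrt_pair_neg_iff, div_lt_iff₀ (mul_pos hc hδ)]
  have key : (δ - c) ^ 2 + 4 * α * q / R < (-c - δ) ^ 2 ↔ α * q / R < c * δ := by
    rw [show (-c - δ) ^ 2 = (δ - c) ^ 2 + 4 * (c * δ) by ring, mul_div_assoc, mul_div_assoc]
    constructor <;> intro h <;> linarith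
  rw [key, div_lt_iff₀ hR]
  constructor
  · rintro ⟨-, h⟩
    linarith
  · intro h
    exact ⟨by linarith, by linarith⟩

theorem forall_mem_resident_pair_neg {α v δ c p R : ℝ} (hc : 0 < c) (hδ : 0 < δ)
    (hv : 0 < α * v) (hp : α * p / R = c * δ) :
    ∀ μ ∈ ({(-(α * v) - δ - c + √((α * v + δ - c) ^ 2 + 4 * α * p / R)) / 2,
        (-(α * v) - δ - c - √((α * v + δ - c) ^ 2 + 4 * α * p / R)) / 2} : Multiset ℝ),
      μ < 0 := by
  rw [forall_mem_sqrt_pair_neg_iff]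
  constructor
  · linarith
  · have : 4 * α * p / R = 4 * (c * δ) := by rw [← hp]; ring
    nlinarith [mul_pos hc hv]

/-- with the mutation parameters p₂ = q₃ = 0, R₁ > 1, and
X₁ = (1 − 1/R₁, 0, 0, δ₁(R₁−1)/α₁, 0, 0), the six eigenvalues of J(X₁) are the six
listed real numbers, and all six of them are negative iff R₁ > R₂ and R₁ > R₃. -/
theorem stmt_12 (α₁ α₂ α₃ δ₁ δ₂ δ₃ c p₁ q₂ r₃ : ℝ)
    (hα₁ : 0 < α₁) (hα₂ : 0 < α₂) (hα₃ : 0 < α₃)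
    (hδ₁ : 0 < δ₁) (hδ₂ : 0 < δ₂) (hδ₃ : 0 < δ₃) (hc : 0 < c)
    (hp₁ : 0 < p₁) (hq₂ : 0 < q₂) (hr₃ : 0 < r₃)
    (hR₁ : 1 < α₁ * p₁ / (c * δ₁)) :
    let R₁ : ℝ := α₁ * p₁ / (c * δ₁)
    let R₂ : ℝ := α₂ * q₂ / (c * δ₂)
    let R₃ : ℝ := α₃ * r₃ / (c * δ₃)
    let v₁ : ℝ := δ₁ * (R₁ - 1) / α₁
    let M := Jhbv α₁ α₂ α₃ δ₁ δ₂ δ₃ c p₁ 0 q₂ 0 r₃ ![1 - 1 / R₁, 0, 0, v₁, 0, 0]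
    let evs : Multiset ℝ :=
      {(-(α₁ * v₁) - δ₁ - c + Real.sqrt ((α₁ * v₁ + δ₁ - c) ^ 2 + 4 * α₁ * p₁ / R₁)) / 2,
       (-(α₁ * v₁) - δ₁ - c - Real.sqrt ((α₁ * v₁ + δ₁ - c) ^ 2 + 4 * α₁ * p₁ / R₁)) / 2,
       (-c - δ₂ + Real.sqrt ((δ₂ - c) ^ 2 + 4 * α₂ * q₂ / R₁)) / 2,
       (-c - δ₂ - Real.sqrt ((δ₂ - c) ^ 2 + 4 * α₂ * q₂ / R₁)) / 2,
       (-c - δ₃ + Real.sqrt ((δ₃ - c) ^ 2 + 4 * α₃ * r₃ / R₁)) / 2,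
       (-c - δ₃ - Real.sqrt ((δ₃ - c) ^ 2 + 4 * α₃ * r₃ / R₁)) / 2}
    M.charpoly.roots = evs ∧
      ((∀ μ ∈ evs, μ < 0) ↔ R₂ < R₁ ∧ R₃ < R₁) := by
  intro R₁ R₂ R₃ v₁ M evs
  have hR₁₀ : 0 < R₁ := one_pos.trans hR₁
  have hevs : evs = _ := Multiset.insert_six_eq_add_pairs _ _ _ _ _ _
  rw [hevs]
  constructor
  · refine (congrArg roots ?_).trans (roots_multiset_prod_X_sub_C _)
    rw [charpoly_Jhbv_of_mutant_virions_zero _ _ _ _ _ _ _ _ _ _ _ rfl rfl, Multiset.map_add,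
      Multiset.map_add, Multiset.prod_add, Multiset.prod_add]
    simp only [Matrix.cons_val]
    refine congrArg₂ _ (congrArg₂ _ ?_ ?_) ?_ <;>
      exact X_add_C_mul_X_add_C_sub_C_eq_prod (by ring) (by ring) (by positivity)
  · have hαv₁ : 0 < α₁ * v₁ := by
      rw [show α₁ * v₁ = δ₁ * (R₁ - 1) by simp only [v₁]; field_simp]
      exact mul_pos hδ₁ (sub_pos.2 hR₁)
    have hk₁ : α₁ * p₁ / R₁ = c * δ₁ := by simp only [R₁]; field_simp
    simp only [Multiset.mem_add, or_imp, forall_and]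
    rw [forall_mem_mutant_pair_neg_iff hc hδ₂ hR₁₀, forall_mem_mutant_pair_neg_iff hc hδ₃ hR₁₀,
      and_iff_right (forall_mem_resident_pair_neg hc hδ₁ hαv₁ hk₁)]
end
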